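/- Let B = [[B₁₁, B₁₂], [B₂₁, B₂₂]] be a constant Hermitian (m+n)×(m+n) block matrix with B₂₂ of size n×n, let Z_n = diag(0_{n₀}, z₁I_{n₁}, …, z_dI_{n_d}) with n₀ + n₁ + ⋯ + n_d = n, and suppose B₂₂ + Z_n is invertible for all z ∈ Π^d. Then f(z) = B₁₁ − B₁₂(B₂₂ + Z_n)⁻¹B₂₁ satisfies the identity (f(z) − f(z)*)/(2i) = B₂₁*·(B₂₂ + Z_n)⁻¹*·(Z_n − Z_n*)/(2i)·(B₂₂ + Z_n)⁻¹·B₂₁ for all z where the inverse exists; consequently f is a Cayley inner function of the Pick class 𝒫_d^{m×m}. -/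

import Mathlib

open Matrix MvPolynomial
open scoped ComplexOrder

noncomputable section

/-- The open upper poly-half-plane (coordinates indexed by `ι`). -/
def UHP (ι : Type*) : Set (ι → ℂ) := {z | ∀ k, 0 < (z k).im}

/-- `(M - Mᴴ)/(2i)`. -/
def imPart {n : Type*} (M : Matrix n n ℂ) : Matrix n n ℂ :=
  (2 * Complex.I)⁻¹ • (M - Mᴴ)

/-- Index type realizing `n = n₀ + n₁ + ⋯ + n_d`. -/
abbrev ZIdx {d : ℕ} (n : Fin (d + 1) → ℕ) : Type := (k : Fin (d + 1)) × Fin (n k)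

/-- `Z_n = diag(0_{n₀}, z₁ I_{n₁}, …, z_d I_{n_d})`. -/
def ZZero {d : ℕ} (n : Fin (d + 1) → ℕ) (z : Fin d → ℂ) : Matrix (ZIdx n) (ZIdx n) ℂ :=
  Matrix.diagonal fun p => Fin.cases (0 : ℂ) (fun j => z j) p.1

/-! The realization formula `f = P - Cᴴ A⁻¹ C` transports the imaginary part of `A` to that of
`f` by a congruence: `Im (A⁻¹) = -A⁻¹ᴴ (Im A) A⁻¹`. With `A = B₂₂ + Z_n` and `B₂₂` Hermitian,
`Im A = Z_n(Im z)`, which is positive semidefinite on the poly-half-plane and vanishes at real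
points; this gives the Pick property and Cayley innerness. Holomorphy comes from the
differentiability of inversion in the Banach algebra of matrices. -/

section Differentiability

variable {𝕜 E : Type*} [RCLike 𝕜] [NormedAddCommGroup E] [NormedSpace 𝕜 E] {s : Set E}
  {p q r : Type*}

open scoped Matrix.Norms.Operator in
theorem differentiableOn_matrix_iff [Fintype p] [Fintype q] {M : E → Matrix p q 𝕜} :
    DifferentiableOn 𝕜 M s ↔ ∀ i j, DifferentiableOn 𝕜 (fun x => M x i j) s := by
  refine ((ofLinearEquiv 𝕜).symm.toContinuousLinearEquiv.comp_differentiableOn_iff).symm.trans ?_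
  simp only [differentiableOn_pi]
  rfl

open scoped Matrix.Norms.Operator in
theorem DifferentiableOn.matrix_inv_apply [Fintype p] [DecidableEq p] {M : E → Matrix p p 𝕜}
    (hM : ∀ i j, DifferentiableOn 𝕜 (fun x => M x i j) s) (hu : ∀ x ∈ s, IsUnit (M x)) :
    ∀ i j, DifferentiableOn 𝕜 (fun x => (M x)⁻¹ i j) s := by
  rw [← differentiableOn_matrix_iff] at hM ⊢
  simp only [nonsing_inv_eq_ringInverse]
  exact hM.inverse hu

theorem DifferentiableOn.matrix_mul_apply [Fintype q] {M : E → Matrix r q 𝕜}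
    {N : E → Matrix q p 𝕜}
    (hM : ∀ i j, DifferentiableOn 𝕜 (fun x => M x i j) s)
    (hN : ∀ i j, DifferentiableOn 𝕜 (fun x => N x i j) s) :
    ∀ i j, DifferentiableOn 𝕜 (fun x => (M x * N x) i j) s := by
  intro i j
  simp only [mul_apply]
  exact DifferentiableOn.fun_sum fun k _ => (hM i k).mul (hN k j)

end Differentiability

section ImaginaryPart

variable {p q : Type*}

theorem imPart_eq_zero_iff {M : Matrix p p ℂ} : imPart M = 0 ↔ M.IsHermitian := by
  rw [imPart, smul_eq_zero_iff_right (by simp [Complex.I_ne_zero]), sub_eq_zero, eq_comm]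
  rfl

theorem imPart_add (M N : Matrix p p ℂ) : imPart (M + N) = imPart M + imPart N := by
  simp only [imPart, conjTranspose_add, ← smul_add]
  abel_nf

theorem imPart_sub (M N : Matrix p p ℂ) : imPart (M - N) = imPart M - imPart N := by
  simp only [imPart, conjTranspose_sub, ← smul_sub]
  abel_nf

theorem imPart_conjTranspose_mul_mul [Fintype p] (C : Matrix p q ℂ) (M : Matrix p p ℂ) :
    imPart (Cᴴ * M * C) = Cᴴ * imPart M * C := by
  simp only [imPart, conjTranspose_mul, conjTranspose_conjTranspose, Matrix.mul_smul,
    Matrix.smul_mul, Matrix.mul_sub, Matrix.sub_mul, Matrix.mul_assoc]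

theorem imPart_inv [Fintype p] [DecidableEq p] {A : Matrix p p ℂ} (hA : IsUnit A) :
    imPart A⁻¹ = -(A⁻¹ᴴ * imPart A * A⁻¹) := by
  have hAA : A * A⁻¹ = 1 := mul_nonsing_inv A ((isUnit_iff_isUnit_det A).mp hA)
  have hAA' : A⁻¹ᴴ * Aᴴ = 1 := by rw [← conjTranspose_mul, hAA, conjTranspose_one]
  simp only [imPart, Matrix.mul_smul, Matrix.smul_mul, Matrix.mul_sub, Matrix.sub_mul,
    ← smul_neg, neg_sub]
  rw [Matrix.mul_assoc A⁻¹ᴴ A, hAA, Matrix.mul_one, hAA', Matrix.one_mul]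

theorem imPart_diagonal [Fintype p] [DecidableEq p] (v : p → ℂ) :
    imPart (diagonal v) = diagonal fun i => ((v i).im : ℂ) := by
  ext i j
  rcases eq_or_ne i j with rfl | hij
  · simp only [imPart, Matrix.smul_apply, Matrix.sub_apply, conjTranspose_apply,
      diagonal_apply_eq, smul_eq_mul, RCLike.star_def, Complex.sub_conj]
    field_simp
    push_cast
    ring
  · simp [imPart, diagonal_apply_ne _ hij]

theorem imPart_sub_conjTranspose_mul_inv_mul [Fintype p] [DecidableEq p] {P : Matrix q q ℂ}
    (hP : P.IsHermitian) (C : Matrix p q ℂ) {A : Matrix p p ℂ} (hA : IsUnit A) :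
    imPart (P - Cᴴ * A⁻¹ * C) = Cᴴ * A⁻¹ᴴ * imPart A * A⁻¹ * C := by
  rw [imPart_sub, imPart_eq_zero_iff.mpr hP, imPart_conjTranspose_mul_mul, imPart_inv hA]
  simp only [Matrix.mul_neg, Matrix.neg_mul, zero_sub, neg_neg, Matrix.mul_assoc]

end ImaginaryPart

section ZZero

variable {d : ℕ} (n : Fin (d + 1) → ℕ)

theorem ZZero_zero : ZZero n 0 = 0 := by
  ext p q
  simp only [ZZero, Pi.zero_apply, Matrix.zero_apply, diagonal_apply]
  split_ifs <;> cases p.1 using Fin.cases <;> simp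

theorem imPart_ZZero (z : Fin d → ℂ) :
    imPart (ZZero n z) = ZZero n fun j => ((z j).im : ℂ) := by
  rw [ZZero, ZZero, imPart_diagonal]
  congr 1
  funext p
  cases p.1 using Fin.cases <;> simp

theorem imPart_ZZero_ofReal (x : Fin d → ℝ) : imPart (ZZero n fun j => (x j : ℂ)) = 0 := by
  rw [imPart_ZZero]
  simp only [Complex.ofReal_im, Complex.ofReal_zero]
  exact ZZero_zero n

theorem posSemidef_ZZero {w : Fin d → ℂ} (hw : ∀ j, 0 ≤ w j) : (ZZero n w).PosSemidef := by
  refine posSemidef_diagonal_iff.mpr fun p => ?_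
  cases p.1 using Fin.cases <;> simp [hw]

theorem differentiable_ZZero_apply (p q : ZIdx n) :
    Differentiable ℂ fun z : Fin d → ℂ => ZZero n z p q := by
  rcases eq_or_ne p q with rfl | hpq
  · simp only [ZZero, diagonal_apply_eq]
    cases p.1 using Fin.cases with
    | zero => exact differentiable_const 0
    | succ j => exact (ContinuousLinearMap.proj j : (Fin d → ℂ) →L[ℂ] ℂ).differentiable
  · simp only [ZZero, diagonal_apply_ne _ hpq]
    exact differentiable_const 0

end ZZero

/-- for a constant Hermitian block matrix `B`, the function
`f(z) = B₁₁ − B₁₂(B₂₂+Z_n)⁻¹B₂₁` satisfies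
`(f(z)−f(z)*)/(2i) = B₂₁*(B₂₂+Z_n)⁻¹*((Z_n−Z_n*)/(2i))(B₂₂+Z_n)⁻¹B₂₁`
whenever the inverse exists; consequently it is a Cayley inner function of the Pick
class. -/
theorem hermitian_realization_is_cayley_inner_pick (d m : ℕ) (n : Fin (d + 1) → ℕ)
    (B : Matrix (Fin m ⊕ ZIdx n) (Fin m ⊕ ZIdx n) ℂ)
    (hB : B.IsHermitian)
    (hinv : ∀ z ∈ UHP (Fin d), IsUnit (B.toBlocks₂₂ + ZZero n z))
    (f : (Fin d → ℂ) → Matrix (Fin m) (Fin m) ℂ)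
    (hf : ∀ z, f z = B.toBlocks₁₁ -
      B.toBlocks₁₂ * (B.toBlocks₂₂ + ZZero n z)⁻¹ * B.toBlocks₂₁) :
    -- the identity, wherever the inverse exists :
    (∀ z : Fin d → ℂ, IsUnit (B.toBlocks₂₂ + ZZero n z) →
      imPart (f z) =
        B.toBlocks₂₁ᴴ * ((B.toBlocks₂₂ + ZZero n z)⁻¹)ᴴ * imPart (ZZero n z) *
          (B.toBlocks₂₂ + ZZero n z)⁻¹ * B.toBlocks₂₁) ∧
    -- `f` belongs to the Pick class `𝒫_d^{m×m}` :
    (∀ i j, DifferentiableOn ℂ (fun z => f z i j) (UHP (Fin d))) ∧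
    (∀ z ∈ UHP (Fin d), (imPart (f z)).PosSemidef) ∧
    -- and `f` is Cayley inner :
    (∀ x : Fin d → ℝ, IsUnit (B.toBlocks₂₂ + ZZero n fun t => (x t : ℂ)) →
      (f fun t => (x t : ℂ)).IsHermitian) := by
  obtain ⟨h₁₁, -, h₁₂, h₂₂⟩ := isHermitian_fromBlocks_iff.mp (B.fromBlocks_toBlocks ▸ hB)
  have identity (z : Fin d → ℂ) (hz : IsUnit (B.toBlocks₂₂ + ZZero n z)) :
      imPart (f z) = B.toBlocks₂₁ᴴ * ((B.toBlocks₂₂ + ZZero n z)⁻¹)ᴴ * imPart (ZZero n z) *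
        (B.toBlocks₂₂ + ZZero n z)⁻¹ * B.toBlocks₂₁ := by
    rw [hf, ← h₁₂, imPart_sub_conjTranspose_mul_inv_mul h₁₁ _ hz,
      imPart_add, imPart_eq_zero_iff.mpr h₂₂, zero_add]
  refine ⟨identity, fun i j => ?_, fun z hz => ?_, fun x hx => ?_⟩
  · have hA := DifferentiableOn.matrix_inv_apply (fun p q =>
      (differentiable_ZZero_apply n p q).differentiableOn.const_add _) hinv
    have hconst {a b : Type} (C : Matrix a b ℂ) (i j) :
        DifferentiableOn ℂ (fun _ : Fin d → ℂ => C i j) (UHP (Fin d)) := differentiableOn_const _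
    simp only [hf, Matrix.sub_apply]
    exact (hconst _ i j).sub <| DifferentiableOn.matrix_mul_apply
      (DifferentiableOn.matrix_mul_apply (hconst _) hA) (hconst _) i j
  · have hIm := posSemidef_ZZero n fun j => Complex.zero_le_real.mpr (hz j).le
    rw [identity z (hinv z hz), imPart_ZZero, ← conjTranspose_mul,
      Matrix.mul_assoc _ _ B.toBlocks₂₁]
    exact hIm.conjTranspose_mul_mul_same _
  · rw [← imPart_eq_zero_iff, identity _ hx, imPart_ZZero_ofReal, Matrix.mul_zero,
      Matrix.zero_mul, Matrix.zero_mul]
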